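/- For the multiple-symbol adjustable phase shift pilots X_{k,(Q)} = √Q · U_{(φ_k mod Q),:} ⊗ X_{⌊φ_k/Q⌋}, where U is an arbitrary Q×Q unitary matrix and X_φ = √σ·D_φ·X are the one-symbol pilots, one has X_{k',(Q)} (X_{k,(Q)})^H = σ·Q·δ((φ_{k'} mod Q) − (φ_k mod Q)) · D_{⌊φ_{k'}/Q⌋ − ⌊φ_k/Q⌋}. -/

import Mathlib

open Matrix Complex Real Kronecker

/-- The diagonal phase shift matrix `D_φ = diag(f_{N,φ})`. -/
noncomputable def phaseDiag (N : ℕ) (φ : ℤ) : Matrix (Fin N) (Fin N) ℂ :=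
  Matrix.diagonal fun j : Fin N =>
    Complex.exp (-(2 * π * Complex.I * (j : ℕ) * φ) / N)

/-- One-symbol adjustable phase shift pilot `X_φ = √σ · D_φ · X`. -/
noncomputable def apsp (N : ℕ) (σ : ℝ) (X : Matrix (Fin N) (Fin N) ℂ) (φ : ℤ) :
    Matrix (Fin N) (Fin N) ℂ :=
  (Real.sqrt σ : ℂ) • (phaseDiag N φ * X)

/-
The Kronecker structure splits the cross-correlation into the product of the row correlation
`U_{r',:} (U_{r,:})ᴴ = δ(r' - r)`, which is orthonormality of the rows of `U`, and the one-symbol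
correlation `X_{φ'} X_φᴴ = σ D_{φ'} X Xᴴ D_φᴴ = σ D_{φ' - φ}`, since `D_φᴴ = D_{-φ}` and
`φ ↦ D_φ` is multiplicative.
-/

theorem Matrix.replicateRow_mul_conjTranspose_replicateRow {ι n α : Type*}
    [Unique ι] [DecidableEq ι] [Fintype n] [DecidableEq n] [Semiring α] [StarRing α]
    (U : Matrix n n α) (hU : U * Uᴴ = 1) (i j : n) :
    replicateRow ι (U i) * (replicateRow ι (U j))ᴴ = (if i = j then (1 : α) else 0) • 1 := by
  ext a b
  have hentry : (U * Uᴴ) i j = (1 : Matrix n n α) i j := by rw [hU]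
  simpa [Subsingleton.elim a b, mul_apply, one_apply] using hentry

theorem Complex.ofReal_sqrt_mul_star_self {x : ℝ} (hx : 0 ≤ x) :
    (√x : ℂ) * star (√x : ℂ) = x := by
  rw [star_def, conj_ofReal, ← ofReal_mul, mul_self_sqrt hx]

theorem phaseDiag_conjTranspose (N : ℕ) (φ : ℤ) : (phaseDiag N φ)ᴴ = phaseDiag N (-φ) := by
  rw [phaseDiag, diagonal_conjTranspose, phaseDiag]
  congr 1
  funext j
  rw [Pi.star_apply, star_def, ← exp_conj, map_div₀]
  push_cast
  simp [conj_I, conj_ofNat]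

theorem phaseDiag_mul_phaseDiag (N : ℕ) (φ φ' : ℤ) :
    phaseDiag N φ' * phaseDiag N φ = phaseDiag N (φ' + φ) := by
  rw [phaseDiag, phaseDiag, phaseDiag, diagonal_mul_diagonal]
  congr 1
  funext j
  rw [← Complex.exp_add]
  push_cast
  congr 1
  ring

theorem apsp_mul_conjTranspose_apsp (N : ℕ) {σ : ℝ} (hσ : 0 ≤ σ)
    {X : Matrix (Fin N) (Fin N) ℂ} (hX : X * Xᴴ = 1) (φ φ' : ℤ) :
    apsp N σ X φ' * (apsp N σ X φ)ᴴ = (σ : ℂ) • phaseDiag N (φ' - φ) := by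
  calc apsp N σ X φ' * (apsp N σ X φ)ᴴ
      = ((√σ : ℂ) * star (√σ : ℂ)) • (phaseDiag N φ' * (X * Xᴴ) * (phaseDiag N φ)ᴴ) := by
        rw [apsp, apsp, conjTranspose_smul, Matrix.smul_mul, Matrix.mul_smul, smul_smul,
          conjTranspose_mul, Matrix.mul_assoc, Matrix.mul_assoc, Matrix.mul_assoc]
    _ = (σ : ℂ) • phaseDiag N (φ' - φ) := by
        rw [ofReal_sqrt_mul_star_self hσ, hX, Matrix.mul_one, phaseDiag_conjTranspose,
          phaseDiag_mul_phaseDiag, sub_eq_add_neg]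

theorem apsp_multi_symbol_cross_correlation_general
    (N Q : ℕ) (hQ : 0 < Q) (σ : ℝ) (hσ : 0 < σ)
    (X : Matrix (Fin N) (Fin N) ℂ)
    (hXu : X * Xᴴ = 1)
    (U : Matrix (Fin Q) (Fin Q) ℂ) (hU' : U * Uᴴ = 1)
    (φk φk' : ℕ)
    (Xk Xk' : Matrix (Fin 1 × Fin N) (Fin Q × Fin N) ℂ)
    (hXk : Xk = (Real.sqrt Q : ℂ) •
      ((Matrix.of fun (_ : Fin 1) (j : Fin Q) => U ⟨φk % Q, Nat.mod_lt _ hQ⟩ j) ⊗ₖ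
        apsp N σ X ((φk / Q : ℕ) : ℤ)))
    (hXk' : Xk' = (Real.sqrt Q : ℂ) •
      ((Matrix.of fun (_ : Fin 1) (j : Fin Q) => U ⟨φk' % Q, Nat.mod_lt _ hQ⟩ j) ⊗ₖ
        apsp N σ X ((φk' / Q : ℕ) : ℤ))) :
    Xk' * Xkᴴ =
      ((σ : ℂ) * (Q : ℂ) * (if φk' % Q = φk % Q then 1 else 0)) •
        ((1 : Matrix (Fin 1) (Fin 1) ℂ) ⊗ₖ
          phaseDiag N (((φk' / Q : ℕ) : ℤ) - ((φk / Q : ℕ) : ℤ))) := by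
  subst hXk hXk'
  change (_ : ℂ) • (replicateRow (Fin 1) (U _) ⊗ₖ _) *
    ((_ : ℂ) • (replicateRow (Fin 1) (U _) ⊗ₖ _))ᴴ = _
  rw [conjTranspose_smul, Matrix.smul_mul, Matrix.mul_smul, smul_smul,
    ofReal_sqrt_mul_star_self (Nat.cast_nonneg Q), conjTranspose_kronecker,
    ← mul_kronecker_mul, replicateRow_mul_conjTranspose_replicateRow U hU',
    apsp_mul_conjTranspose_apsp N hσ.le hXu, smul_kronecker, kronecker_smul]
  simp only [Fin.mk.injEq, ofReal_natCast, smul_smul]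
  congr 1
  ring

/-- Cross-correlation of the multiple-symbol APSPs
`X_{k,(Q)} = √Q · U_{(φ_k mod Q),:} ⊗ X_{⌊φ_k/Q⌋}`:
`X_{k',(Q)} X_{k,(Q)}ᴴ = σ·Q·δ((φ_{k'} mod Q) − (φ_k mod Q)) · D_{⌊φ_{k'}/Q⌋ − ⌊φ_k/Q⌋}`. -/
theorem apsp_multi_symbol_cross_correlation
    (N Q : ℕ) (hN : 0 < N) (hQ : 0 < Q) (σ : ℝ) (hσ : 0 < σ)
    (x : Fin N → ℂ) (X : Matrix (Fin N) (Fin N) ℂ)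
    (hX : X = Matrix.diagonal x) (hXu : X * Xᴴ = 1)
    (U : Matrix (Fin Q) (Fin Q) ℂ) (hU : Uᴴ * U = 1) (hU' : U * Uᴴ = 1)
    (φk φk' : ℕ) (hφk : φk < Q * N) (hφk' : φk' < Q * N)
    (Xk Xk' : Matrix (Fin 1 × Fin N) (Fin Q × Fin N) ℂ)
    (hXk : Xk = (Real.sqrt Q : ℂ) •
      ((Matrix.of fun (_ : Fin 1) (j : Fin Q) => U ⟨φk % Q, Nat.mod_lt _ hQ⟩ j) ⊗ₖ
        apsp N σ X ((φk / Q : ℕ) : ℤ)))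
    (hXk' : Xk' = (Real.sqrt Q : ℂ) •
      ((Matrix.of fun (_ : Fin 1) (j : Fin Q) => U ⟨φk' % Q, Nat.mod_lt _ hQ⟩ j) ⊗ₖ
        apsp N σ X ((φk' / Q : ℕ) : ℤ))) :
    Xk' * Xkᴴ =
      ((σ : ℂ) * (Q : ℂ) * (if φk' % Q = φk % Q then 1 else 0)) •
        ((1 : Matrix (Fin 1) (Fin 1) ℂ) ⊗ₖ
          phaseDiag N (((φk' / Q : ℕ) : ℤ) - ((φk / Q : ℕ) : ℤ))) :=
  apsp_multi_symbol_cross_correlation_general N Q hQ σ hσ X hXu U hU' φk φk' Xk Xk' hXk hXk'
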